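/- arXiv:1601.01968 — 4 statements merged into one kernel-verified Lean document; each statement's English description precedes it below -/
import Mathlib

section
/- Let P, Q be finite sets with |P| = |Q| = n ≥ 2, let 1 ≤ r ≤ n − 1, and let φ be a bijection from the r-element subsets of P to the r-element subsets of Q such that |φ(A₁) ∩ ⋯ ∩ φ(A_k)| = |A₁ ∩ ⋯ ∩ A_k| for every nonempty finite family of r-element subsets A₁, …, A_k of P. Then for each p ∈ P, the complement in Q of the union ⋃{φ(A) : A an r-subset of P with p ∉ A} is a singleton. -/
/-!
The `r`-subsets of `P` avoiding `p` cover exactly `P \ {p}`, which has `n - 1` elements. By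
inclusion–exclusion, the cardinality of a union is determined by the cardinalities of all
intersections of its members, which `φ` preserves; so the union of their images, a subset of `Q`,
also has `n - 1` elements, and its complement in `Q` is a single point.
-/

open Finset

namespace Finset

theorem card_biUnion_eq_of_card_inf'_eq {ι α β : Type*} [DecidableEq α] [DecidableEq β]
    (s : Finset ι) (A : ι → Finset α) (B : ι → Finset β)
    (h : ∀ t ⊆ s, ∀ ht : t.Nonempty, #(t.inf' ht A) = #(t.inf' ht B)) :
    #(s.biUnion A) = #(s.biUnion B) := by
  have : (#(s.biUnion A) : ℤ) = #(s.biUnion B) := by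
    rw [inclusion_exclusion_card_biUnion, inclusion_exclusion_card_biUnion]
    refine sum_congr rfl fun t _ => ?_
    rw [h t.1 (mem_powerset.1 (mem_filter.1 t.2).1)]
  exact_mod_cast this

theorem inf'_univ_equivFin_symm {ι γ : Type*} [SemilatticeInf γ] (t : Finset ι)
    (ht : t.Nonempty) [Nonempty (Fin #t)] (f : ι → γ) :
    univ.inf' univ_nonempty (fun i => f (t.equivFin.symm i)) = t.inf' ht f := by
  classical
  have himage : univ.image (fun i => (t.equivFin.symm i : ι)) = t := by
    ext x
    simp only [mem_image, mem_univ, true_and]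
    exact ⟨fun ⟨i, hi⟩ => hi ▸ coe_mem _, fun hx => ⟨t.equivFin ⟨x, hx⟩, by simp⟩⟩
  rw [← Function.comp_def f, inf'_comp_eq_image]
  exact inf'_congr _ himage fun _ _ => rfl

theorem filter_card_eq_and_notMem_eq_powersetCard_erase {α : Type*} [DecidableEq α]
    (P : Finset α) (r : ℕ) (p : α) :
    P.powerset.filter (fun A => #A = r ∧ p ∉ A) = (P.erase p).powersetCard r := by
  ext A
  simp only [mem_filter, mem_powerset, mem_powersetCard, subset_erase]
  tauto

end Finset

theorem stmt_4_general {α β : Type*} [DecidableEq α] [DecidableEq β]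
    (P : Finset α) (Q : Finset β) (n r : ℕ)
    (hP : P.card = n) (hQ : Q.card = n) (hr1 : 1 ≤ r) (hrn : r ≤ n - 1)
    (φ : Finset α → Finset β)
    (hbij : Set.BijOn φ {A : Finset α | A ⊆ P ∧ A.card = r}
      {B : Finset β | B ⊆ Q ∧ B.card = r})
    (hint : ∀ (ι : Type) [Fintype ι] [Nonempty ι] (A : ι → Finset α),
      (∀ i, A i ⊆ P ∧ (A i).card = r) →
      (Finset.univ.inf' Finset.univ_nonempty fun i => φ (A i)).card =
        (Finset.univ.inf' Finset.univ_nonempty fun i => A i).card) :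
    ∀ p ∈ P,
      (Q \ (P.powerset.filter (fun A => A.card = r ∧ p ∉ A)).sup φ).card = 1 := by
  intro p hp
  rw [filter_card_eq_and_notMem_eq_powersetCard_erase, sup_eq_biUnion]
  set S := (P.erase p).powersetCard r
  have hS : ∀ A ∈ S, A ⊆ P ∧ #A = r := fun A hA =>
    have ⟨hAP, hAr⟩ := mem_powersetCard.1 hA
    ⟨hAP.trans (erase_subset p P), hAr⟩
  have hinter : ∀ t ⊆ S, ∀ ht : t.Nonempty, #(t.inf' ht id) = #(t.inf' ht φ) := by
    intro t hts ht
    have : Nonempty (Fin #t) := ⟨⟨0, ht.card_pos⟩⟩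
    have h := hint (Fin #t) (fun i => t.equivFin.symm i) fun i => hS _ (hts (coe_mem _))
    rw [inf'_univ_equivFin_symm t ht φ] at h
    exact (congrArg card (inf'_univ_equivFin_symm t ht id)).symm.trans h.symm
  have hcard : #(S.biUnion φ) = n - 1 := by
    rw [← card_biUnion_eq_of_card_inf'_eq S id φ hinter,
      powersetCard_biUnion (by omega) (by rw [card_erase_of_mem hp, hP]; exact hrn),
      card_erase_of_mem hp, hP]
  have hsub : S.biUnion φ ⊆ Q := biUnion_subset.2 fun A hA => (hbij.mapsTo (hS A hA)).1
  have hn_pos : 0 < n := hP ▸ card_pos.2 ⟨p, hp⟩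
  rw [card_sdiff_of_subset hsub, hQ, hcard]
  omega

theorem stmt_4 {α β : Type*} [DecidableEq α] [DecidableEq β]
    (P : Finset α) (Q : Finset β) (n r : ℕ)
    (hP : P.card = n) (hQ : Q.card = n) (hn : 2 ≤ n) (hr1 : 1 ≤ r) (hrn : r ≤ n - 1)
    (φ : Finset α → Finset β)
    (hbij : Set.BijOn φ {A : Finset α | A ⊆ P ∧ A.card = r}
      {B : Finset β | B ⊆ Q ∧ B.card = r})
    (hint : ∀ (ι : Type) [Fintype ι] [Nonempty ι] (A : ι → Finset α),
      (∀ i, A i ⊆ P ∧ (A i).card = r) →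
      (Finset.univ.inf' Finset.univ_nonempty fun i => φ (A i)).card =
        (Finset.univ.inf' Finset.univ_nonempty fun i => A i).card) :
    ∀ p ∈ P,
      (Q \ (P.powerset.filter (fun A => A.card = r ∧ p ∉ A)).sup φ).card = 1 :=
  stmt_4_general P Q n r hP hQ hr1 hrn φ hbij hint
end

section
/- Let P, Q be finite sets with |P| = |Q| = n ≥ 2, let 1 ≤ r ≤ n − 1, and let φ be a bijection from the r-element subsets of P to the r-element subsets of Q preserving all intersection cardinalities (|⋂ φ(A_i)| = |⋂ A_i| for every nonempty finite family of r-subsets). Then there exists a bijection π : P → Q such that φ(A) = π(A) (the image of A under π) for every r-element subset A of P. -/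
/-!
The `r`-subsets of `P` through a point `p` (its star) intersect exactly in `{p}`, because
`1 ≤ r < #P`; so the images under `φ` of the star of `p` meet in a single point `π p`. For `p ≠ q`
the union of the two stars has empty intersection, hence so do its images, which forces
`π p ≠ π q`. Every `φ A` contains the `#A` distinct points `π p` with `p ∈ A` and has `#A` elements,
so `φ A = π '' A`.
-/

open Finset

theorem Finset.inf'_eq_inf'_univ_equivFin {γ δ : Type*} [SemilatticeInf δ] (T : Finset γ)
    (hT : T.Nonempty) (g : γ → δ) :
    haveI : Nonempty (Fin #T) := ⟨⟨0, hT.card_pos⟩⟩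
    T.inf' hT g = univ.inf' univ_nonempty fun i => g (T.equivFin.symm i) :=
  le_antisymm (le_inf' _ _ fun i _ => inf'_le _ (T.equivFin.symm i).2)
    (le_inf' _ _ fun A hA => by
      simpa using inf'_le (fun i => g (T.equivFin.symm i)) (mem_univ (T.equivFin ⟨A, hA⟩)))

section

variable {α β : Type*} [DecidableEq α] [DecidableEq β]

def PreservesInterCard (P : Finset α) (r : ℕ) (φ : Finset α → Finset β) : Prop :=
  ∀ (T : Finset (Finset α)) (hT : T.Nonempty), T ⊆ P.powersetCard r →
    #(T.inf' hT φ) = #(T.inf' hT id)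

theorem preservesInterCard_of_forall_fintype {P : Finset α} {r : ℕ} {φ : Finset α → Finset β}
    (h : ∀ (ι : Type) [Fintype ι] [Nonempty ι] (A : ι → Finset α),
      (∀ i, A i ⊆ P ∧ #(A i) = r) →
      #(univ.inf' univ_nonempty fun i => φ (A i)) = #(univ.inf' univ_nonempty fun i => A i)) :
    PreservesInterCard P r φ := by
  intro T hT hTP
  -- reindex by `Fin #T`, since `h` only quantifies over index types in `Type`
  have : Nonempty (Fin #T) := ⟨⟨0, hT.card_pos⟩⟩
  rw [T.inf'_eq_inf'_univ_equivFin hT, T.inf'_eq_inf'_univ_equivFin hT]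
  exact h _ _ fun i => mem_powersetCard.1 (hTP (T.equivFin.symm i).2)

def rStar (P : Finset α) (r : ℕ) (p : α) : Finset (Finset α) :=
  (P.powersetCard r).filter (p ∈ ·)

variable {P : Finset α} {r : ℕ} {p q : α}

theorem mem_rStar {A : Finset α} : A ∈ rStar P r p ↔ A ∈ P.powersetCard r ∧ p ∈ A :=
  mem_filter

theorem rStar_subset : rStar P r p ⊆ P.powersetCard r := filter_subset _ _

theorem rStar_nonempty (hp : p ∈ P) (hr : 1 ≤ r) (hrP : r ≤ #P) : (rStar P r p).Nonempty := by
  obtain ⟨A, hpA, hAP, hA⟩ := exists_subsuperset_card_eq (singleton_subset_iff.2 hp)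
    (by simpa using hr) hrP
  exact ⟨A, mem_rStar.2 ⟨mem_powersetCard.2 ⟨hAP, hA⟩, singleton_subset_iff.1 hpA⟩⟩

theorem inf'_rStar (hp : p ∈ P) (hr : 1 ≤ r) (hrP : r < #P) :
    (rStar P r p).inf' (rStar_nonempty hp hr hrP.le) id = {p} := by
  refine eq_singleton_iff_unique_mem.2
    ⟨(mem_inf' _).2 fun A hA => (mem_rStar.1 hA).2, fun q hq => ?_⟩
  by_contra hqp
  have hqP : q ∈ P := by
    obtain ⟨A, hA⟩ := rStar_nonempty hp hr hrP.le
    exact mem_powersetCard.1 (mem_rStar.1 hA).1 |>.1 ((mem_inf' _).1 hq A hA)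
  obtain ⟨A, hpA, hAP, hA⟩ := exists_subsuperset_card_eq
    (singleton_subset_iff.2 (mem_erase.2 ⟨Ne.symm hqp, hp⟩)) (by simpa using hr)
    (by rw [card_erase_of_mem hqP]; omega)
  have hAstar : A ∈ rStar P r p := mem_rStar.2
    ⟨mem_powersetCard.2 ⟨hAP.trans (erase_subset _ _), hA⟩, singleton_subset_iff.1 hpA⟩
  exact (mem_erase.1 (hAP ((mem_inf' _).1 hq A hAstar))).1 rfl

variable {φ : Finset α → Finset β}

theorem exists_forall_mem_rStar (hφ : PreservesInterCard P r φ) (hr : 1 ≤ r) (hrP : r < #P) :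
    ∃ π : α → β, ∀ p ∈ P, ∀ A ∈ rStar P r p, π p ∈ φ A := by
  have hpoint : ∀ p ∈ P, ∃ q, ∀ A ∈ rStar P r p, q ∈ φ A := by
    intro p hp
    have hone := hφ _ (rStar_nonempty hp hr hrP.le) rStar_subset
    rw [inf'_rStar hp hr hrP, card_singleton] at hone
    obtain ⟨q, hq⟩ := card_pos.1 (hone.symm ▸ Nat.one_pos)
    exact ⟨q, (mem_inf' _).1 hq⟩
  obtain ⟨p₀, hp₀⟩ := card_pos.1 (Nat.zero_lt_of_lt hrP)
  have : Nonempty β := ⟨(hpoint p₀ hp₀).choose⟩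
  choose! π hπ using hpoint
  exact ⟨π, hπ⟩

theorem injOn_of_forall_mem_rStar (hφ : PreservesInterCard P r φ) (hr : 1 ≤ r) (hrP : r < #P)
    {π : α → β} (hπ : ∀ p ∈ P, ∀ A ∈ rStar P r p, π p ∈ φ A) : Set.InjOn π P := by
  intro p hp q hq hpq
  by_contra hne
  have hp' := rStar_nonempty hp hr hrP.le
  have hq' := rStar_nonempty hq hr hrP.le
  have hT : (rStar P r p ∪ rStar P r q).Nonempty := hp'.mono subset_union_left
  -- the two stars together have empty intersection, yet `π p = π q` lies in all their images
  have hempty : (rStar P r p ∪ rStar P r q).inf' hT id = ∅ := by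
    rw [inf'_union hp' hq', inf'_rStar hp hr hrP, inf'_rStar hq hr hrP]
    exact disjoint_iff_inter_eq_empty.1 (disjoint_singleton.2 hne)
  have hmem : π p ∈ (rStar P r p ∪ rStar P r q).inf' hT φ := by
    refine (mem_inf' _).2 fun A hA => ?_
    rcases mem_union.1 hA with hA | hA
    · exact hπ p hp A hA
    · exact hpq ▸ hπ q hq A hA
  have hcard := hφ (rStar P r p ∪ rStar P r q) hT (union_subset rStar_subset rStar_subset)
  rw [hempty, card_empty, card_eq_zero] at hcard
  simp [hcard] at hmem

theorem eq_image_of_forall_mem_rStar {π : α → β} (hπ : ∀ p ∈ P, ∀ A ∈ rStar P r p, π p ∈ φ A)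
    (hinj : Set.InjOn π P) {A : Finset α} (hA : A ∈ P.powersetCard r) (hφA : #(φ A) = r) :
    φ A = A.image π := by
  obtain ⟨hAP, hAr⟩ := mem_powersetCard.1 hA
  refine (eq_of_subset_of_card_le ?_ ?_).symm
  · rintro _ hq
    obtain ⟨p, hpA, rfl⟩ := mem_image.1 hq
    exact hπ p (hAP hpA) A (mem_rStar.2 ⟨hA, hpA⟩)
  · rw [card_image_of_injOn (hinj.mono hAP), hφA, hAr]

end

theorem stmt_5_general {α β : Type*} [DecidableEq α] [DecidableEq β]
    (P : Finset α) (Q : Finset β) (n r : ℕ)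
    (hP : P.card = n) (hQ : Q.card = n) (hr1 : 1 ≤ r) (hrn : r ≤ n - 1)
    (φ : Finset α → Finset β)
    (hbij : Set.BijOn φ {A : Finset α | A ⊆ P ∧ A.card = r}
      {B : Finset β | B ⊆ Q ∧ B.card = r})
    (hint : ∀ (ι : Type) [Fintype ι] [Nonempty ι] (A : ι → Finset α),
      (∀ i, A i ⊆ P ∧ (A i).card = r) →
      (Finset.univ.inf' Finset.univ_nonempty fun i => φ (A i)).card =
        (Finset.univ.inf' Finset.univ_nonempty fun i => A i).card) :
    ∃ π : α → β, Set.BijOn π ↑P ↑Q ∧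
      ∀ A : Finset α, A ⊆ P → A.card = r → φ A = A.image π := by
  have hrP : r < #P := by omega
  have hφ := preservesInterCard_of_forall_fintype hint
  have hφA : ∀ A ∈ P.powersetCard r, φ A ⊆ Q ∧ #(φ A) = r := fun A hA =>
    hbij.mapsTo (mem_powersetCard.1 hA)
  obtain ⟨π, hπ⟩ := exists_forall_mem_rStar hφ hr1 hrP
  have hinj := injOn_of_forall_mem_rStar hφ hr1 hrP hπ
  have hmaps : Set.MapsTo π P Q := fun p hp => by
    obtain ⟨A, hA⟩ := rStar_nonempty hp hr1 hrP.le
    exact (hφA A (mem_rStar.1 hA).1).1 (hπ p hp A hA)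
  refine ⟨π, ⟨hmaps, hinj, surjOn_of_injOn_of_card_le π hmaps hinj (by omega)⟩, ?_⟩
  intro A hAP hAr
  have hA : A ∈ P.powersetCard r := mem_powersetCard.2 ⟨hAP, hAr⟩
  exact eq_image_of_forall_mem_rStar hπ hinj hA (hφA A hA).2

theorem stmt_5 {α β : Type*} [DecidableEq α] [DecidableEq β]
    (P : Finset α) (Q : Finset β) (n r : ℕ)
    (hP : P.card = n) (hQ : Q.card = n) (hn : 2 ≤ n) (hr1 : 1 ≤ r) (hrn : r ≤ n - 1)
    (φ : Finset α → Finset β)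
    (hbij : Set.BijOn φ {A : Finset α | A ⊆ P ∧ A.card = r}
      {B : Finset β | B ⊆ Q ∧ B.card = r})
    (hint : ∀ (ι : Type) [Fintype ι] [Nonempty ι] (A : ι → Finset α),
      (∀ i, A i ⊆ P ∧ (A i).card = r) →
      (Finset.univ.inf' Finset.univ_nonempty fun i => φ (A i)).card =
        (Finset.univ.inf' Finset.univ_nonempty fun i => A i).card) :
    ∃ π : α → β, Set.BijOn π ↑P ↑Q ∧
      ∀ A : Finset α, A ⊆ P → A.card = r → φ A = A.image π :=
  stmt_5_general P Q n r hP hQ hr1 hrn φ hbij hint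
end

section
/- Let Div be the group of finitely supported ℤ-valued functions on a set V, with deg(D) = ∑ D(v). Suppose rk : Div → ℤ satisfies: (i) Riemann–Roch: rk(D) − rk(K − D) = deg(D) − g + 1 for a fixed K ∈ Div and integer g ≥ 0; (ii) superadditivity on nonnegative-rank divisors: if rk(D) ≥ 0 and rk(E) ≥ 0 then rk(D + E) ≥ rk(D) + rk(E); (iii) rk(0) = 0. Then for any D with rk(D) ≥ 0 and rk(K − D) ≥ 0, one has 2·rk(D) ≤ deg(D). -/
section RiemannRoch

variable {A : Type*} [AddCommGroup A] (rk deg : A → ℤ) (K : A) (g : ℤ)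

theorem rank_canonical_eq_of_riemannRoch
    (hRR : ∀ D, rk D - rk (K - D) = deg D - g + 1) (hzero : rk 0 = 0) (hdeg : deg 0 = 0) :
    rk K = g - 1 := by
  have h := hRR 0
  rw [sub_zero, hzero, hdeg] at h
  linarith

/-- Superadditivity applied to `D` and `K - D` bounds `rk D + rk (K - D)` by `rk K = g - 1`, while
Riemann–Roch gives `rk D - rk (K - D)`; adding the two eliminates `rk (K - D)` and `g`. -/
theorem two_mul_rank_le_degree_of_riemannRoch
    (hRR : ∀ D, rk D - rk (K - D) = deg D - g + 1)
    (hsuper : ∀ D E, 0 ≤ rk D → 0 ≤ rk E → rk D + rk E ≤ rk (D + E))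
    (hK : rk K = g - 1) {D : A} (hD : 0 ≤ rk D) (hKD : 0 ≤ rk (K - D)) :
    2 * rk D ≤ deg D := by
  have hsum : rk D + rk (K - D) ≤ g - 1 := by
    simpa only [add_sub_cancel, hK] using hsuper D (K - D) hD hKD
  linarith [hRR D]

end RiemannRoch

theorem stmt_7_general {V : Type*} (rk : (V →₀ ℤ) → ℤ) (K : V →₀ ℤ) (g : ℤ)
    (hRR : ∀ D : V →₀ ℤ, rk D - rk (K - D) = (D.sum fun _ n => n) - g + 1)
    (hsuper : ∀ D E : V →₀ ℤ, 0 ≤ rk D → 0 ≤ rk E → rk D + rk E ≤ rk (D + E))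
    (hzero : rk 0 = 0) :
    ∀ D : V →₀ ℤ, 0 ≤ rk D → 0 ≤ rk (K - D) →
      2 * rk D ≤ D.sum fun _ n => n := by
  have hK : rk K = g - 1 :=
    rank_canonical_eq_of_riemannRoch rk _ K g hRR hzero Finsupp.sum_zero_index
  intro D hD hKD
  exact two_mul_rank_le_degree_of_riemannRoch rk _ K g hRR hsuper hK hD hKD

theorem stmt_7 {V : Type*} (rk : (V →₀ ℤ) → ℤ) (K : V →₀ ℤ) (g : ℤ) (hg : 0 ≤ g)
    (hRR : ∀ D : V →₀ ℤ, rk D - rk (K - D) = (D.sum fun _ n => n) - g + 1)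
    (hsuper : ∀ D E : V →₀ ℤ, 0 ≤ rk D → 0 ≤ rk E → rk D + rk E ≤ rk (D + E))
    (hzero : rk 0 = 0) :
    ∀ D : V →₀ ℤ, 0 ≤ rk D → 0 ≤ rk (K - D) →
      2 * rk D ≤ D.sum fun _ n => n :=
  stmt_7_general rk K g hRR hsuper hzero
end

section
/- Let P, Q be finite sets with |P| = |Q| = n ≥ 2 and 1 ≤ r ≤ n − 1. Suppose π : P → Q is a map and φ is the induced map on r-element subsets, φ(A) = π(A), and φ is a bijection from r-subsets of P to r-subsets of Q. Then π is a bijection and |φ(A₁) ∩ ⋯ ∩ φ(A_k)| = |A₁ ∩ ⋯ ∩ A_k| for every nonempty finite family of r-subsets A_i of P. -/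
namespace Finset

variable {α β ι : Type*} [DecidableEq α] [DecidableEq β]

/-- If `f p₁ = f p₂` with `p₁ ≠ p₂`, completing a common `(r - 1)`-subset `B` of `s \ {p₁, p₂}`
by `p₁` or by `p₂` gives two different `r`-subsets of `s` with the same image. -/
theorem injOn_of_injOn_image_of_card_eq {s : Finset α} {r : ℕ} {f : α → β}
    (hr : 1 ≤ r) (hrs : r < #s)
    (hf : Set.InjOn (image f) {A : Finset α | A ⊆ s ∧ #A = r}) : Set.InjOn f s := by
  intro p₁ hp₁ p₂ hp₂ hfp
  by_contra hne
  obtain ⟨B, hBs, hB⟩ : ∃ B ⊆ (s.erase p₁).erase p₂, #B = r - 1 := by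
    refine exists_subset_card_eq ?_
    rw [card_erase_of_mem (mem_erase.2 ⟨Ne.symm hne, hp₂⟩), card_erase_of_mem hp₁]
    omega
  have hp₁B : p₁ ∉ B := fun h => by simpa using hBs h
  have hp₂B : p₂ ∉ B := fun h => by simpa using hBs h
  have hBs' : B ⊆ s := hBs.trans ((erase_subset _ _).trans (erase_subset _ _))
  have hmem : ∀ p ∈ s, p ∉ B → insert p B ∈ {A : Finset α | A ⊆ s ∧ #A = r} :=
    fun p hp hpB => ⟨insert_subset hp hBs', by rw [card_insert_of_notMem hpB, hB]; omega⟩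
  have hins : insert p₁ B = insert p₂ B :=
    hf (hmem p₁ hp₁ hp₁B) (hmem p₂ hp₂ hp₂B) (by rw [image_insert, image_insert, hfp])
  have : p₁ ∈ insert p₂ B := hins ▸ mem_insert_self p₁ B
  rcases mem_insert.1 this with h | h
  exacts [hne h, hp₁B h]

theorem image_inf'_of_injOn {t : Finset ι} (ht : t.Nonempty) {s : Finset α} {f : α → β}
    (hf : Set.InjOn f s) (A : ι → Finset α) (hA : ∀ i ∈ t, A i ⊆ s) :
    (t.inf' ht A).image f = t.inf' ht fun i => (A i).image f := by
  ext b
  simp only [mem_image, mem_inf']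
  constructor
  · rintro ⟨a, ha, rfl⟩ i hi
    exact ⟨a, ha i hi, rfl⟩
  · intro h
    obtain ⟨i₀, hi₀⟩ := ht
    obtain ⟨a, ha, rfl⟩ := h i₀ hi₀
    refine ⟨a, fun i hi => ?_, rfl⟩
    obtain ⟨a', ha', hfa⟩ := h i hi
    rwa [← hf (hA i hi ha') (hA i₀ hi₀ ha) hfa]

end Finset

theorem stmt_12_general {α β : Type*} [DecidableEq α] [DecidableEq β]
    (P : Finset α) (Q : Finset β) (n r : ℕ)
    (hP : P.card = n) (hQ : Q.card = n) (hr1 : 1 ≤ r) (hrn : r ≤ n - 1)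
    (π : α → β) (hmaps : ∀ p ∈ P, π p ∈ Q)
    (hbij : Set.BijOn (fun A : Finset α => A.image π)
      {A : Finset α | A ⊆ P ∧ A.card = r} {B : Finset β | B ⊆ Q ∧ B.card = r}) :
    Set.BijOn π ↑P ↑Q ∧
      ∀ (ι : Type) [Fintype ι] [Nonempty ι] (A : ι → Finset α),
        (∀ i, A i ⊆ P ∧ (A i).card = r) →
        (Finset.univ.inf' Finset.univ_nonempty fun i => (A i).image π).card =
          (Finset.univ.inf' Finset.univ_nonempty fun i => A i).card := by
  have hinj : Set.InjOn π P :=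
    Finset.injOn_of_injOn_image_of_card_eq hr1 (by omega) hbij.injOn
  refine ⟨⟨hmaps, hinj, Finset.surjOn_of_injOn_of_card_le π hmaps hinj (by omega)⟩, ?_⟩
  intro ι _ _ A hA
  have hsub : Finset.univ.inf' Finset.univ_nonempty A ⊆ P :=
    (Finset.inf'_le A (Finset.mem_univ (Classical.arbitrary ι))).trans
      (hA (Classical.arbitrary ι)).1
  rw [← Finset.image_inf'_of_injOn _ hinj A fun i _ => (hA i).1,
    Finset.card_image_of_injOn (hinj.mono hsub)]

theorem stmt_12 {α β : Type*} [DecidableEq α] [DecidableEq β]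
    (P : Finset α) (Q : Finset β) (n r : ℕ)
    (hP : P.card = n) (hQ : Q.card = n) (hn : 2 ≤ n) (hr1 : 1 ≤ r) (hrn : r ≤ n - 1)
    (π : α → β) (hmaps : ∀ p ∈ P, π p ∈ Q)
    (hbij : Set.BijOn (fun A : Finset α => A.image π)
      {A : Finset α | A ⊆ P ∧ A.card = r} {B : Finset β | B ⊆ Q ∧ B.card = r}) :
    Set.BijOn π ↑P ↑Q ∧
      ∀ (ι : Type) [Fintype ι] [Nonempty ι] (A : ι → Finset α),
        (∀ i, A i ⊆ P ∧ (A i).card = r) →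
        (Finset.univ.inf' Finset.univ_nonempty fun i => (A i).image π).card =
          (Finset.univ.inf' Finset.univ_nonempty fun i => A i).card :=
  stmt_12_general P Q n r hP hQ hr1 hrn π hmaps hbij
end
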